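/- arXiv:1610.07682 — 4 statements merged into one kernel-verified Lean document; each statement's English description precedes it below -/
import Mathlib

section
/- (Effros' theorem) Let G be a Polish topological group acting continuously and transitively on a Polish space X. Then the action is micro-transitive: for every x ∈ X and every neighborhood N of the identity in G, the set N·x = {g·x : g ∈ N} is a neighborhood of x in X. -/
/-!
Baire category first: `G` is covered by countably many translates of a small neighbourhood `V`
of `1`, so by transitivity `X` is covered by countably many translates of `closure (V • {x})`,
which therefore has interior; translating a point `g • x`, `g ∈ V`, of that interior back to `x`
shows that `closure ((V⁻¹ * V) • {x})` is a neighbourhood of `x`.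

To remove the closure, fix a complete metric on `G`; it need not be invariant, so one cannot
simply approximate `y ∈ closure (ball 1 (r / 2) • {x})` by a Cauchy sequence `g n` with
`g n • x → y`. Instead one moves alternately on both sides, keeping
`a n • y ∈ closure (ball (b n) (r / 2 / 2 ^ n) • {x})`: first `b` moves so that `b • x` comes
close to `a • y`, then `a` moves so that the invariant holds with half the radius. Both sequences
are Cauchy and their limits `A, B ∈ closedBall 1 r` satisfy `y = (A⁻¹ * B) • x`.
-/

open Filter Set Topology Metric MulAction
open scoped Pointwise

theorem exists_seq_of_forall_exists_succ {α : Type*} {P : ℕ → α → Prop}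
    {R : ℕ → α → α → Prop} {a : α} (ha : P 0 a)
    (step : ∀ n x, P n x → ∃ y, P (n + 1) y ∧ R n x y) :
    ∃ s : ℕ → α, s 0 = a ∧ ∀ n, R n (s n) (s (n + 1)) := by
  have : Nonempty α := ⟨a⟩
  choose! f hfP hfR using step
  let s : ℕ → α := fun n ↦ Nat.rec a f n
  have hs : ∀ n, P n (s n) := fun n ↦ by
    induction n with
    | zero => exact ha
    | succ n ih => exact hfP n _ ih
  exact ⟨s, rfl, fun n ↦ hfR n _ (hs n)⟩

theorem exists_tendsto_dist_le_of_le_geometric_two {α : Type*} [PseudoMetricSpace α]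
    [CompleteSpace α] {u : ℕ → α} {C : ℝ} (hu : ∀ n, dist (u n) (u (n + 1)) ≤ C / 2 / 2 ^ n) :
    ∃ a, Tendsto u atTop (𝓝 a) ∧ dist (u 0) a ≤ C := by
  obtain ⟨a, ha⟩ := cauchySeq_tendsto_of_complete (cauchySeq_of_le_geometric_two hu)
  exact ⟨a, ha, dist_le_of_le_geometric_two_of_tendsto₀ hu ha⟩

section Baire

variable {G X : Type*} [Group G] [TopologicalSpace G] [IsTopologicalGroup G]
  [SecondCountableTopology G] [TopologicalSpace X] [BaireSpace X] [MulAction G X]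
  [ContinuousConstSMul G X] [IsPretransitive G X]

theorem closure_image_smul_mem_nhds_of_secondCountable {U : Set G} (hU : U ∈ 𝓝 1)
    (x : X) : closure ((· • x) '' U) ∈ 𝓝 x := by
  rw [← smul_singleton]
  obtain ⟨V, V_mem, -, V_symm, VU⟩ := exists_closed_nhds_one_inv_eq_mul_subset hU
  obtain ⟨s, s_count, hs⟩ : ∃ s : Set G, s.Countable ∧ ⋃ g ∈ s, g • V = univ :=
    countable_cover_nhds fun g ↦ by simpa using (smul_mem_nhds_smul_iff g).2 V_mem
  obtain ⟨⟨g, _⟩, hg⟩ : ∃ g : s, (interior (closure ((g : G) • V • ({x} : Set X)))).Nonempty := by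
    have : Nonempty X := ⟨x⟩
    have : Countable s := s_count.to_subtype
    refine nonempty_interior_of_iUnion_of_closed (fun _ ↦ isClosed_closure)
      (eq_univ_of_forall fun y ↦ ?_)
    obtain ⟨h, rfl⟩ := exists_smul_eq G x y
    obtain ⟨g, gs, hg⟩ := exists_set_mem_of_union_eq_top s _ hs h
    refine mem_iUnion.2 ⟨⟨g, gs⟩, subset_closure ?_⟩
    rw [← smul_assoc]
    exact Set.smul_mem_smul hg rfl
  obtain ⟨y, hy⟩ : (interior (closure (V • ({x} : Set X)))).Nonempty := by
    rwa [closure_smul, interior_smul, smul_set_nonempty] at hg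
  obtain ⟨g, hg, hgx⟩ : ∃ g ∈ V, g • x ∈ interior (closure (V • ({x} : Set X))) := by
    obtain ⟨_, hz, hzV⟩ := (closure_inter_open_nonempty_iff isOpen_interior).1
      ⟨y, interior_subset hy, hy⟩
    rw [smul_singleton] at hz
    obtain ⟨g, hg, rfl⟩ := hz
    exact ⟨g, hg, hzV⟩
  have hsub : (g⁻¹ • V) • ({x} : Set X) ⊆ U • {x} := by
    refine smul_subset_smul_right ((smul_set_subset_smul (inv_mem_inv.2 hg)).trans ?_)
    rwa [V_symm]
  have hx : x ∈ interior (closure ((g⁻¹ • V) • ({x} : Set X))) := by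
    rwa [smul_assoc, closure_smul, interior_smul, mem_inv_smul_set_iff]
  exact mem_interior_iff_mem_nhds.1 (interior_mono (closure_mono hsub) hx)

end Baire

section CompleteMetric

variable {G X : Type*} [Group G] [PseudoMetricSpace G] [IsTopologicalGroup G]
  [TopologicalSpace X] [MulAction G X]

theorem closure_image_smul_ball_mem_nhds
    (hweak : ∀ z : X, ∀ U ∈ 𝓝 (1 : G), closure ((· • z) '' U) ∈ 𝓝 z)
    (g : G) {r : ℝ} (hr : 0 < r) (z : X) : closure ((· • z) '' ball g r) ∈ 𝓝 (g • z) := by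
  have hU : (· * g) ⁻¹' ball g r ∈ 𝓝 (1 : G) :=
    (continuous_mul_const g).continuousAt.preimage_mem_nhds (by simpa using ball_mem_nhds g hr)
  refine mem_of_superset (hweak (g • z) _ hU) (closure_mono ?_)
  rintro _ ⟨u, hu, rfl⟩
  exact ⟨u * g, hu, mul_smul u g z⟩

theorem exists_mem_ball_smul_mem_closure_image_ball_half [ContinuousConstSMul G X]
    (hweak : ∀ z : X, ∀ U ∈ 𝓝 (1 : G), closure ((· • z) '' U) ∈ 𝓝 z)
    {x y : X} {a b : G} {r : ℝ} (hr : 0 < r) (h : a • y ∈ closure ((· • x) '' ball b r))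
    {O : Set X} (hO : O ∈ 𝓝 y) :
    ∃ a' ∈ ball a r, ∃ b' ∈ ball b r,
      (a⁻¹ * b') • x ∈ O ∧ a' • y ∈ closure ((· • x) '' ball b' (r / 2)) := by
  have hnhds : closure ((· • y) '' ball a r) ∩ a • O ∈ 𝓝 (a • y) :=
    inter_mem (closure_image_smul_ball_mem_nhds hweak a hr y) ((smul_mem_nhds_smul_iff a).2 hO)
  obtain ⟨_, ⟨hb'y, hb'O⟩, b', hb', rfl⟩ := mem_closure_iff_nhds.1 h _ hnhds
  obtain ⟨_, ha'x, a', ha', rfl⟩ := mem_closure_iff_nhds.1 hb'y _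
    (closure_image_smul_ball_mem_nhds hweak b' (half_pos hr) x)
  refine ⟨a', ha', b', hb', ?_, ha'x⟩
  rwa [mul_smul, ← mem_smul_set_iff_inv_smul_mem]

theorem closure_image_smul_ball_subset [CompleteSpace G] [FirstCountableTopology X]
    [T2Space X] [ContinuousSMul G X]
    (hweak : ∀ z : X, ∀ U ∈ 𝓝 (1 : G), closure ((· • z) '' U) ∈ 𝓝 z) (x : X) {r : ℝ}
    (hr : 0 < r) :
    closure ((· • x) '' ball (1 : G) (r / 2)) ⊆
      (· • x) '' ((closedBall (1 : G) r)⁻¹ * closedBall 1 r) := by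
  intro y hy
  obtain ⟨O, hO⟩ := (𝓝 y).exists_antitone_basis
  obtain ⟨s, hs0, hs⟩ := exists_seq_of_forall_exists_succ
    (P := fun n (p : G × G) ↦ p.1 • y ∈ closure ((· • x) '' ball p.2 (r / 2 / 2 ^ n)))
    (R := fun n p q ↦ dist q.1 p.1 < r / 2 / 2 ^ n ∧ dist q.2 p.2 < r / 2 / 2 ^ n ∧
      (p.1⁻¹ * q.2) • x ∈ O n)
    (a := ((1 : G), (1 : G))) (by simpa using hy) fun n p hp ↦ by
      obtain ⟨a', ha', b', hb', hO', hP⟩ :=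
        exists_mem_ball_smul_mem_closure_image_ball_half hweak (by positivity) hp (hO.mem n)
      exact ⟨(a', b'), by rwa [pow_succ, ← div_div], ha', hb', hO'⟩
  obtain ⟨A, hA, hA1⟩ := exists_tendsto_dist_le_of_le_geometric_two
    (u := fun n ↦ (s n).1) fun n ↦ by rw [dist_comm]; exact (hs n).1.le
  obtain ⟨B, hB, hB1⟩ := exists_tendsto_dist_le_of_le_geometric_two
    (u := fun n ↦ (s n).2) fun n ↦ by rw [dist_comm]; exact (hs n).2.1.le
  have hlim : Tendsto (fun n ↦ ((s n).1⁻¹ * (s (n + 1)).2) • x) atTop (𝓝 ((A⁻¹ * B) • x)) :=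
    (hA.inv.mul (hB.comp (tendsto_add_atTop_nat 1))).smul_const x
  refine ⟨A⁻¹ * B, mul_mem_mul (inv_mem_inv.2 ?_) ?_,
    tendsto_nhds_unique hlim (hO.tendsto fun n ↦ (hs n).2.2)⟩
  · simpa [hs0, dist_comm] using hA1
  · simpa [hs0, dist_comm] using hB1

end CompleteMetric

/-- Effros' theorem: a continuous transitive action of a Polish group
on a Polish space is micro-transitive. -/
theorem stmt3 (G X : Type*) [Group G] [TopologicalSpace G] [IsTopologicalGroup G]
    [PolishSpace G] [TopologicalSpace X] [PolishSpace X]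
    [MulAction G X] [ContinuousSMul G X]
    (htrans : ∀ x y : X, ∃ g : G, g • x = y)
    (x : X) (N : Set G) (hN : N ∈ nhds (1 : G)) :
    (fun g : G => g • x) '' N ∈ nhds x := by
  let := TopologicalSpace.upgradeIsCompletelyMetrizable G
  have : IsPretransitive G X := ⟨htrans⟩
  have hweak : ∀ z : X, ∀ U ∈ 𝓝 (1 : G), closure ((· • z) '' U) ∈ 𝓝 z :=
    fun z _ hU ↦ closure_image_smul_mem_nhds_of_secondCountable hU z
  obtain ⟨V, hV, -, hVinv, hVN⟩ := exists_closed_nhds_one_inv_eq_mul_subset hN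
  obtain ⟨r, hr, hrV⟩ := nhds_basis_closedBall.mem_iff.1 hV
  refine mem_of_superset (hweak x _ (ball_mem_nhds 1 (half_pos hr)))
    ((closure_image_smul_ball_subset hweak x hr).trans (image_mono ?_))
  exact (mul_subset_mul (inv_subset_inv.2 hrV) hrV).trans (by rwa [hVinv])
end

section
/- Let X be a compact metric space with metric d, and let G be a closed subgroup of Homeo(X) (with the compact-open topology) acting transitively on X. Then for every ε > 0 there exists δ > 0 such that for all x, y ∈ X with d(x,y) < δ there exists φ ∈ G with φ(x) = y and sup_{z∈X} d(φ(z),z) < ε. -/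
/-!
Effros' argument. The map `f ↦ (f, f⁻¹)` embeds `Homeo(X)` into the Polish space
`C(X, X) × C(X, X)` and sends the closed subgroup `G` to a closed, hence Polish, set. For `η > 0`
let `U_η z = {f z | f ∈ G, sup_x d(f x, x) ≤ η}`. Countably many left translates of the `η`-ball
of `G` cover `G`, so by transitivity countably many homeomorphic copies of `U_η z` cover `X`, and
`U_η z` is not meagre by the Baire category theorem. As a continuous image of a Polish space it
has the Baire property (Lusin–Sierpiński), so it is comeagre in some open set, and after a
translation `U_{2η} z` is comeagre in a neighbourhood of `z`. For `y` near `z` the sets `U_{2η} y`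
and `U_{2η} z` are both comeagre near `y`, hence meet, which puts `y` in `U_{4η} z`. A Lebesgue
number of the resulting open cover of the compact space `X` is the required `δ`.
-/

/-- The group structure on self-homeomorphisms of a space, under composition. -/
instance homeoGroup (X : Type*) [TopologicalSpace X] : Group (X ≃ₜ X) where
  mul f g := g.trans f
  one := Homeomorph.refl X
  inv := Homeomorph.symm
  mul_assoc _ _ _ := Homeomorph.ext fun _ => rfl
  one_mul _ := Homeomorph.ext fun _ => rfl
  mul_one _ := Homeomorph.ext fun _ => rfl
  inv_mul_cancel f := Homeomorph.ext fun x => f.symm_apply_apply x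

open Set Filter Topology Metric TopologicalSpace

section Baire
variable {Z : Type*} [TopologicalSpace Z] {s t : Set Z}

theorem isMeagre_diff_of_residualEq (h : s =ᵇ t) : IsMeagre (s \ t) := by
  rw [IsMeagre]
  filter_upwards [eventuallyEq_set.1 h] with x hx hxst
  exact hxst.2 (hx.1 hxst.1)

theorem residualEq_of_isMeagre_diff (hst : IsMeagre (s \ t)) (hts : IsMeagre (t \ s)) :
    s =ᵇ t := by
  rw [eventuallyEq_set]
  filter_upwards [hst, hts] with x hxst hxts
  exact ⟨fun hs => by_contra fun ht => hxst ⟨hs, ht⟩, fun ht => by_contra fun hs => hxts ⟨ht, hs⟩⟩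

theorem BaireMeasurableSet.exists_isOpen_isMeagre_diff_inter_nonempty
    (hs : BaireMeasurableSet s) (hs' : ¬IsMeagre s) :
    ∃ O, IsOpen O ∧ IsMeagre (O \ s) ∧ (s ∩ O).Nonempty := by
  obtain ⟨O, hO, hsO⟩ := hs.residualEq_isOpen
  refine ⟨O, hO, isMeagre_diff_of_residualEq hsO.symm, ?_⟩
  by_contra hempty
  exact hs' ((isMeagre_diff_of_residualEq hsO).mono fun x hx =>
    show x ∈ s \ O from ⟨hx, fun hxO => hempty ⟨x, hx, hxO⟩⟩)

theorem nonempty_inter_of_isMeagre_diff [BaireSpace Z] {N₁ N₂ s₁ s₂ : Set Z}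
    (hN₁ : IsOpen N₁) (hN₂ : IsOpen N₂) (hN : (N₁ ∩ N₂).Nonempty)
    (hs₁ : IsMeagre (N₁ \ s₁)) (hs₂ : IsMeagre (N₂ \ s₂)) : (s₁ ∩ s₂).Nonempty := by
  by_contra hempty
  refine not_isMeagre_of_isOpen (hN₁.inter hN₂) hN ((hs₁.union hs₂).mono ?_)
  rintro x ⟨hx₁, hx₂⟩
  by_cases hxs₁ : x ∈ s₁
  · exact Or.inr ⟨hx₂, fun hxs₂ => hempty ⟨x, hxs₁, hxs₂⟩⟩
  · exact Or.inl ⟨hx₁, hxs₁⟩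

/-- The hull is `A ∪ Uᶜ`, where `U` is the union of the basic open sets in which `A` is meagre. -/
theorem exists_baireMeasurableSet_hull [SecondCountableTopology Z] (A : Set Z) :
    ∃ H, A ⊆ H ∧ BaireMeasurableSet H ∧
      ∀ W ⊆ H \ A, BaireMeasurableSet W → IsMeagre W := by
  set U := ⋃₀ {O ∈ countableBasis Z | IsMeagre (A ∩ O)} with hUdef
  have hU : IsOpen U := isOpen_sUnion fun O hO => isOpen_of_mem_countableBasis hO.1
  have hAU : IsMeagre (A ∩ U) := by
    rw [hUdef, sUnion_eq_biUnion, inter_iUnion₂]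
    exact isMeagre_biUnion ((countable_countableBasis Z).mono fun O hO => hO.1)
      fun O hO => hO.2
  refine ⟨A ∪ Uᶜ, subset_union_left, ?_, fun W hW hWm => ?_⟩
  · have : A ∪ Uᶜ = (A ∩ U) ∪ Uᶜ := by
      ext x; by_cases hx : x ∈ U <;> simp [hx]
    rw [this]
    exact hAU.baireMeasurableSet.union hU.baireMeasurableSet.compl
  obtain ⟨V, hV, hWV⟩ := hWm.residualEq_isOpen
  have hAV : IsMeagre (A ∩ V) := (isMeagre_diff_of_residualEq hWV.symm).mono
    fun x hx => show x ∈ V \ W from ⟨hx.2, fun hxW => (hW hxW).2 hx.1⟩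
  have hVU : V ⊆ U := fun x hx => by
    obtain ⟨O, hO, hxO, hOV⟩ := (isBasis_countableBasis Z).exists_subset_of_mem_open hx hV
    exact ⟨O, ⟨hO, hAV.mono (inter_subset_inter_right A hOV)⟩, hxO⟩
  refine (isMeagre_diff_of_residualEq hWV).mono fun x hx => show x ∈ W \ V from ⟨hx, fun hxV => ?_⟩
  obtain ⟨hxA | hxU, hxA'⟩ := hW hx
  exacts [hxA' hxA, hxU (hVU hxV)]

end Baire

theorem mem_range_of_forall_mem_closure_image {Y Z : Type*} [PseudoMetricSpace Y]
    [CompleteSpace Y] [TopologicalSpace Z] [FirstCountableTopology Z] [T2Space Z]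
    {F : Y → Z} (hF : Continuous F) {K : ℕ → Set Y} (hK : Antitone K) {r : ℕ → ℝ}
    (hr : Tendsto r atTop (𝓝 0)) (hKr : ∀ n, ∀ p ∈ K n, ∀ q ∈ K n, dist p q ≤ r n) {x : Z}
    (hx : ∀ n, x ∈ closure (F '' K n)) : x ∈ range F := by
  obtain ⟨U, hU⟩ := (𝓝 x).exists_antitone_basis
  have hpts : ∀ n, ∃ p ∈ K n, F p ∈ U n := fun n => by
    obtain ⟨_, hxU, p, hp, rfl⟩ := mem_closure_iff_nhds.1 (hx n) (U n) (hU.mem n)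
    exact ⟨p, hp, hxU⟩
  choose p hpK hpU using hpts
  have hp : CauchySeq p := cauchySeq_of_le_tendsto_0 r
    (fun m n N hm hn => hKr N _ (hK hm (hpK m)) _ (hK hn (hpK n))) hr
  obtain ⟨q, hq⟩ := cauchySeq_tendsto_of_complete hp
  exact ⟨q, tendsto_nhds_unique ((hF.tendsto q).comp hq) (hU.tendsto hpU)⟩

theorem List.exists_branch {α : Type*} {P : List α → Prop} (h₀ : P [])
    (hstep : ∀ s, P s → ∃ i, P (i :: s)) :
    ∃ (s : ℕ → List α) (i : ℕ → α), s 0 = [] ∧ (∀ n, s (n + 1) = i n :: s n) ∧ ∀ n, P (s n) := by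
  choose next hnext using hstep
  let b : ℕ → {s // P s} := fun n =>
    Nat.rec ⟨[], h₀⟩ (fun _ t => ⟨next t.1 t.2 :: t.1, hnext t.1 t.2⟩) n
  exact ⟨fun n => (b n).1, fun n => next (b n).1 (b n).2, rfl, fun _ => rfl, fun n => (b n).2⟩

section BallScheme
variable {Y : Type*} [PseudoMetricSpace Y]

def ballScheme (d : ℕ → Y) : List ℕ → Set Y
  | [] => univ
  | i :: s => ballScheme d s ∩ closedBall (d i) (2⁻¹ ^ s.length)

variable {d : ℕ → Y}

theorem ballScheme_cons_subset (i : ℕ) (s : List ℕ) : ballScheme d (i :: s) ⊆ ballScheme d s :=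
  inter_subset_left

theorem iUnion_ballScheme_cons (hd : DenseRange d) (s : List ℕ) :
    ⋃ i, ballScheme d (i :: s) = ballScheme d s := by
  refine Subset.antisymm (iUnion_subset fun i => ballScheme_cons_subset i s) fun p hp => ?_
  obtain ⟨i, hi⟩ := hd.exists_dist_lt p (by positivity : (0 : ℝ) < 2⁻¹ ^ s.length)
  exact mem_iUnion.2 ⟨i, hp, mem_closedBall.2 hi.le⟩

theorem mem_range_of_forall_mem_closure_image_ballScheme [CompleteSpace Y] {Z : Type*}
    [TopologicalSpace Z] [FirstCountableTopology Z] [T2Space Z] {F : Y → Z} (hF : Continuous F)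
    {s : ℕ → List ℕ} {i : ℕ → ℕ} (hs₀ : s 0 = []) (hs : ∀ n, s (n + 1) = i n :: s n) {x : Z}
    (hx : ∀ n, x ∈ closure (F '' ballScheme d (s n))) : x ∈ range F := by
  have hlen : ∀ n, (s n).length = n := fun n => by
    induction n with
    | zero => simp [hs₀]
    | succ n ih => simp [hs, ih]
  refine mem_range_of_forall_mem_closure_image hF (K := fun n => ballScheme d (s (n + 1)))
    (antitone_nat_of_succ_le fun n => by simp only [hs (n + 1)]; exact ballScheme_cons_subset _ _)
    (r := fun n => 2 * 2⁻¹ ^ n) (by simpa using (tendsto_pow_atTop_nhds_zero_of_lt_one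
      (by norm_num) (by norm_num : (2⁻¹ : ℝ) < 1)).const_mul 2) (fun n p hp q hq => ?_)
    fun n => hx (n + 1)
  simp only [hs n, ballScheme, hlen, mem_inter_iff, mem_closedBall] at hp hq
  linarith [dist_triangle_right p q (d (i n)), hp.2, hq.2]

end BallScheme

/-- Lusin–Sierpiński. The images `A s` of the cells of a ball scheme satisfy
`A s = ⋃ i, A (i :: s)`; replace them by Baire measurable hulls `E s ⊆ closure (A s)`. The points
of some `E s` not covered by its children form a meagre set, and every other point of `E []` lies
on an infinite branch of cells, whose points converge to a preimage. -/
theorem Continuous.baireMeasurableSet_range {Y Z : Type*} [TopologicalSpace Y] [PolishSpace Y]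
    [TopologicalSpace Z] [SecondCountableTopology Z] [T2Space Z] {F : Y → Z}
    (hF : Continuous F) : BaireMeasurableSet (range F) := by
  rcases isEmpty_or_nonempty Y with _ | _
  · rw [range_eq_empty]
    exact isOpen_empty.baireMeasurableSet
  let := upgradeIsCompletelyMetrizable Y
  set d := denseSeq Y
  set A : List ℕ → Set Z := fun s => F '' ballScheme d s with hA
  choose H hAH hH hHA using fun s => exists_baireMeasurableSet_hull (A s)
  set E : List ℕ → Set Z := fun s => H s ∩ closure (A s)
  have hAE : ∀ s, A s ⊆ E s := fun s => subset_inter (hAH s) subset_closure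
  have hEm : ∀ s, BaireMeasurableSet (E s) := fun s =>
    (hH s).inter isClosed_closure.isOpen_compl.baireMeasurableSet.of_compl
  have hA_cons : ∀ s, A s = ⋃ i, A (i :: s) := fun s => by
    simp only [hA, ← image_iUnion]
    rw [iUnion_ballScheme_cons (denseRange_denseSeq Y)]
  have hM : IsMeagre (⋃ s, E s \ ⋃ i, E (i :: s)) := isMeagre_iUnion fun s => by
    refine hHA s _ (fun x hx => ⟨hx.1.1, fun hxA => hx.2 ?_⟩)
      ((hEm s).diff (.iUnion fun i => hEm _))
    rw [hA_cons s, mem_iUnion] at hxA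
    obtain ⟨i, hi⟩ := hxA
    exact mem_iUnion.2 ⟨i, hAE _ hi⟩
  have hEM : E [] \ ⋃ s, E s \ ⋃ i, E (i :: s) ⊆ range F := by
    rintro x ⟨hx, hxM⟩
    obtain ⟨s, i, hs₀, hs, hxs⟩ := List.exists_branch (P := fun s => x ∈ E s) hx fun s hs => by
      by_contra! h
      exact hxM (mem_iUnion.2 ⟨s, hs, by simpa using h⟩)
    exact mem_range_of_forall_mem_closure_image_ballScheme hF hs₀ hs fun n => (hxs n).2
  have hFE : range F ⊆ E [] := by
    rw [← image_univ]; exact hAE []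
  exact (hEm []).congr (residualEq_of_isMeagre_diff
    (hM.mono fun x hx => by_contra fun hxM => hx.2 (hEM ⟨hx.1, hxM⟩))
    (IsMeagre.empty.mono fun x hx => hx.2 (hFE hx.1)))

namespace Homeomorph

section PairEmbedding

variable {X : Type*} [TopologicalSpace X]

def pairEmbedding (f : X ≃ₜ X) : C(X, X) × C(X, X) := (f, f.symm)

theorem pairEmbedding_injective : Function.Injective (pairEmbedding (X := X)) :=
  fun _ _ h => Homeomorph.ext fun x => DFunLike.congr_fun (congrArg Prod.fst h) x

theorem pairEmbedding_image_eq (F : Set C(X, X)) :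
    pairEmbedding '' ((fun f : X ≃ₜ X => (f : C(X, X))) ⁻¹' F) =
      {p | p.1.comp p.2 = .id X ∧ p.2.comp p.1 = .id X ∧ p.1 ∈ F} := by
  ext p
  constructor
  · rintro ⟨f, hf, rfl⟩
    exact ⟨ContinuousMap.ext f.apply_symm_apply, ContinuousMap.ext f.symm_apply_apply, hf⟩
  · rintro ⟨h₁₂, h₂₁, hF⟩
    let f : X ≃ₜ X :=
      { toFun := p.1, invFun := p.2, left_inv := DFunLike.congr_fun h₂₁,
        right_inv := DFunLike.congr_fun h₁₂ }
    exact ⟨f, hF, rfl⟩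

theorem isClosed_pairEmbedding_image [T2Space X] [LocallyCompactSpace X] {S : Set (X ≃ₜ X)}
    (hS : IsClosed[.induced (fun f : X ≃ₜ X => (f : C(X, X))) ContinuousMap.compactOpen] S) :
    IsClosed (pairEmbedding '' S) := by
  obtain ⟨F, hF, rfl⟩ := isClosed_induced_iff.1 hS
  rw [pairEmbedding_image_eq]
  exact (isClosed_eq (ContinuousMap.continuous_comp'.comp continuous_swap) continuous_const).inter
    ((isClosed_eq ContinuousMap.continuous_comp' continuous_const).inter
      (hF.preimage continuous_fst))

end PairEmbedding

variable {X : Type*} [MetricSpace X] [CompactSpace X]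

noncomputable def displacement (f : X ≃ₜ X) : ℝ := dist (f : C(X, X)) (ContinuousMap.id X)

theorem dist_apply_le_displacement (f : X ≃ₜ X) (x : X) : dist (f x) x ≤ displacement f :=
  ContinuousMap.dist_apply_le_dist (f := (f : C(X, X))) (g := .id X) x

theorem displacement_le {f : X ≃ₜ X} {C : ℝ} (hC : 0 ≤ C) (h : ∀ x, dist (f x) x ≤ C) :
    displacement f ≤ C :=
  (ContinuousMap.dist_le hC).2 h

theorem iSup_dist_apply_self (f : X ≃ₜ X) : ⨆ x, dist (f x) x = displacement f :=
  le_antisymm (Real.iSup_le (dist_apply_le_displacement f) dist_nonneg)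
    (displacement_le (Real.iSup_nonneg fun _ => dist_nonneg)
      (le_ciSup ⟨displacement f, forall_mem_range.2 (dist_apply_le_displacement f)⟩))

theorem displacement_inv_le (f : X ≃ₜ X) : displacement f⁻¹ ≤ displacement f :=
  displacement_le dist_nonneg fun x => by
    simpa [dist_comm] using dist_apply_le_displacement f (f.symm x)

theorem displacement_mul_le (f g : X ≃ₜ X) :
    displacement (f * g) ≤ displacement f + displacement g :=
  displacement_le (add_nonneg dist_nonneg dist_nonneg) fun x =>
    (dist_triangle (f (g x)) (g x) x).trans
      (add_le_add (dist_apply_le_displacement f _) (dist_apply_le_displacement g x))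

theorem displacement_inv_mul_le (f g : X ≃ₜ X) :
    displacement (g⁻¹ * f) ≤ dist (pairEmbedding g) (pairEmbedding f) :=
  displacement_le dist_nonneg fun x => by
    calc dist (g.symm (f x)) x = dist (g.symm (f x)) (f.symm (f x)) := by
          rw [f.symm_apply_apply]
      _ ≤ dist (g.symm : C(X, X)) f.symm :=
          ContinuousMap.dist_apply_le_dist (f := (g.symm : C(X, X))) (g := f.symm) (f x)
      _ ≤ dist (pairEmbedding g) (pairEmbedding f) := by
          rw [Prod.dist_eq]; exact le_max_right _ _

variable {G : Subgroup (X ≃ₜ X)}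

def localOrbit (G : Subgroup (X ≃ₜ X)) (η : ℝ) (z : X) : Set X :=
  {w | ∃ f ∈ G, f z = w ∧ displacement f ≤ η}

theorem mem_localOrbit_trans {η₁ η₂ : ℝ} {z w u : X} (h₁ : w ∈ localOrbit G η₁ z)
    (h₂ : u ∈ localOrbit G η₂ w) : u ∈ localOrbit G (η₁ + η₂) z := by
  obtain ⟨f, hf, rfl, hf'⟩ := h₁
  obtain ⟨g, hg, rfl, hg'⟩ := h₂
  exact ⟨g * f, G.mul_mem hg hf, rfl, (displacement_mul_le g f).trans (by linarith)⟩

theorem mem_localOrbit_symm {η : ℝ} {z w : X} (h : w ∈ localOrbit G η z) :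
    z ∈ localOrbit G η w := by
  obtain ⟨f, hf, rfl, hf'⟩ := h
  exact ⟨f⁻¹, G.inv_mem hf, f.symm_apply_apply z, (displacement_inv_le f).trans hf'⟩

theorem localOrbit_eq_image (η : ℝ) (z : X) :
    localOrbit G η z = (fun p : C(X, X) × C(X, X) => p.1 z) ''
      (pairEmbedding '' G ∩ {p | dist p.1 (.id X) ≤ η}) := by
  ext w
  constructor
  · rintro ⟨f, hf, rfl, hη⟩
    exact ⟨pairEmbedding f, ⟨mem_image_of_mem _ hf, hη⟩, rfl⟩
  · rintro ⟨_, ⟨⟨f, hf, rfl⟩, hη⟩, rfl⟩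
    exact ⟨f, hf, rfl, hη⟩

theorem baireMeasurableSet_localOrbit (hG : IsClosed (pairEmbedding '' (G : Set (X ≃ₜ X))))
    (η : ℝ) (z : X) : BaireMeasurableSet (localOrbit G η z) := by
  have hC : IsClosed (pairEmbedding '' (G : Set (X ≃ₜ X)) ∩ {p | dist p.1 (.id X) ≤ η}) :=
    hG.inter (isClosed_le (continuous_fst.dist continuous_const) continuous_const)
  have := hC.polishSpace
  rw [localOrbit_eq_image, image_eq_range]
  exact Continuous.baireMeasurableSet_range
    ((continuous_eval_const z).comp (continuous_fst.comp continuous_subtype_val))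

theorem not_isMeagre_localOrbit (htrans : ∀ x y : X, ∃ φ ∈ G, φ x = y) {η : ℝ} (hη : 0 < η)
    (z : X) : ¬IsMeagre (localOrbit G η z) := by
  intro hmeagre
  obtain ⟨c, hcG, hc, hGc⟩ := (IsSeparable.of_separableSpace
    (pairEmbedding '' (G : Set (X ≃ₜ X)))).exists_countable_dense_subset
  have hcover : univ ⊆ ⋃ g ∈ pairEmbedding ⁻¹' c, g '' localOrbit G η z := fun w _ => by
    obtain ⟨f, hf, rfl⟩ := htrans z w
    obtain ⟨_, hgc, hfg⟩ := Metric.mem_closure_iff.1 (hGc (mem_image_of_mem _ hf)) η hη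
    obtain ⟨g, hg, rfl⟩ := hcG hgc
    refine mem_biUnion hgc ⟨g.symm (f z), ⟨g⁻¹ * f, G.mul_mem (G.inv_mem hg) hf, rfl, ?_⟩, ?_⟩
    · exact (displacement_inv_mul_le f g).trans (dist_comm (pairEmbedding f) _ ▸ hfg.le)
    · exact g.apply_symm_apply (f z)
  have : Nonempty X := ⟨z⟩
  exact not_isMeagre_of_isOpen isOpen_univ univ_nonempty
    ((isMeagre_biUnion (hc.preimage pairEmbedding_injective) fun g _ =>
      g.isInducing.isMeagre_image hmeagre).mono hcover)

theorem exists_isOpen_isMeagre_diff_localOrbit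
    (hG : IsClosed (pairEmbedding '' (G : Set (X ≃ₜ X)))) (htrans : ∀ x y : X, ∃ φ ∈ G, φ x = y)
    {η : ℝ} (hη : 0 < η) (z : X) : ∃ N, IsOpen N ∧ z ∈ N ∧ IsMeagre (N \ localOrbit G η z) := by
  obtain ⟨O, hO, hOm, _, ⟨f, hf, rfl, hf'⟩, hfO⟩ :=
    (baireMeasurableSet_localOrbit hG (η / 2) z).exists_isOpen_isMeagre_diff_inter_nonempty
      (not_isMeagre_localOrbit htrans (half_pos hη) z)
  refine ⟨f ⁻¹' O, hO.preimage f.continuous, hfO,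
    (hOm.preimage_of_isOpenMap f.continuous f.isOpenMap).mono fun u hu =>
      show u ∈ f ⁻¹' (O \ localOrbit G (η / 2) z) from ⟨hu.1, fun hfu => hu.2 ?_⟩⟩
  simpa using mem_localOrbit_trans hfu (mem_localOrbit_symm ⟨f, hf, rfl, hf'⟩)

theorem exists_isOpen_subset_localOrbit (hG : IsClosed (pairEmbedding '' (G : Set (X ≃ₜ X))))
    (htrans : ∀ x y : X, ∃ φ ∈ G, φ x = y) {η : ℝ} (hη : 0 < η) (z : X) :
    ∃ N, IsOpen N ∧ z ∈ N ∧ N ⊆ localOrbit G η z := by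
  choose N hN hxN hNm using exists_isOpen_isMeagre_diff_localOrbit hG htrans (half_pos hη)
  refine ⟨N z, hN z, hxN z, fun y hy => ?_⟩
  obtain ⟨w, hwz, hwy⟩ :=
    nonempty_inter_of_isMeagre_diff (hN z) (hN y) ⟨y, hy, hxN y⟩ (hNm z) (hNm y)
  simpa using mem_localOrbit_trans hwz (mem_localOrbit_symm hwy)

end Homeomorph

/-- if a closed subgroup `G` of the homeomorphism group of a compact
metric space `X` (with the compact-open topology) acts transitively on `X`, then for
every `ε > 0` there is `δ > 0` such that any two `δ`-close points are carried one to
the other by some `φ ∈ G` with `sup_z d(φ z, z) < ε`. -/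
theorem stmt4 (X : Type*) [MetricSpace X] [CompactSpace X]
    (t : TopologicalSpace (X ≃ₜ X))
    (ht : t = TopologicalSpace.induced
      (fun f : X ≃ₜ X => (f : C(X, X))) ContinuousMap.compactOpen)
    (G : Subgroup (X ≃ₜ X)) (hG : @IsClosed _ t (G : Set (X ≃ₜ X)))
    (htrans : ∀ x y : X, ∃ φ ∈ G, φ x = y) :
    ∀ ε > (0 : ℝ), ∃ δ > (0 : ℝ), ∀ x y : X, dist x y < δ →
      ∃ φ ∈ G, φ x = y ∧ (⨆ z : X, dist (φ z) z) < ε := by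
  intro ε hε
  subst ht
  choose N hN hzN hNε using
    Homeomorph.exists_isOpen_subset_localOrbit
      (Homeomorph.isClosed_pairEmbedding_image hG) htrans (by positivity : 0 < ε / 4)
  obtain ⟨δ, hδ, hδN⟩ := lebesgue_number_lemma_of_metric isCompact_univ hN
    fun z _ => mem_iUnion.2 ⟨z, hzN z⟩
  refine ⟨δ, hδ, fun x y hxy => ?_⟩
  obtain ⟨z, hz⟩ := hδN x (mem_univ x)
  have hx := hNε z (hz (mem_ball_self hδ))
  have hy := hNε z (hz (mem_ball'.2 hxy))
  obtain ⟨φ, hφ, hφx, hφε⟩ := Homeomorph.mem_localOrbit_trans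
    (Homeomorph.mem_localOrbit_symm hx) hy
  exact ⟨φ, hφ, hφx, by rw [Homeomorph.iSup_dist_apply_self]; linarith⟩
end

section
/- Let p : E → B be a continuous surjection of topological spaces that admits no continuous global section, where B is a nonempty topological space. Then the countable product map p^ℕ : E^ℕ → B^ℕ, (e_i) ↦ (p(e_i)), admits no continuous local section: there is no nonempty open set U ⊂ B^ℕ and continuous s : U → E^ℕ with p^ℕ ∘ s = id_U. -/
/-!
A basic open set of `B^ℕ` constrains only finitely many coordinates, so an open set containing
`a` contains the whole slice `{update a j b | b : B}` for some `j`. Restricting a local section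
of `p^ℕ` to that slice and reading off its `j`-th coordinate gives a global section of `p`.
-/

open Function

theorem IsOpen.exists_forall_update_mem {ι : Type*} [Infinite ι] [DecidableEq ι] {X : ι → Type*}
    [∀ i, TopologicalSpace (X i)] {U : Set (∀ i, X i)} (hU : IsOpen U) {a : ∀ i, X i}
    (ha : a ∈ U) : ∃ j, ∀ b, update a j b ∈ U := by
  obtain ⟨I, v, hv, hsub⟩ := isOpen_pi_iff.mp hU a ha
  obtain ⟨j, hj⟩ := I.exists_notMem
  refine ⟨j, fun b => hsub fun i hi => ?_⟩
  rw [update_of_ne (ne_of_mem_of_not_mem hi hj)]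
  exact (hv i hi).2

theorem exists_continuous_section_of_forall_update_mem {ι E B : Type*} [DecidableEq ι]
    [TopologicalSpace E] [TopologicalSpace B] {p : E → B} {U : Set (ι → B)} {s : U → ι → E}
    (hs : Continuous s) (hsec : ∀ u : U, (fun i => p (s u i)) = (u : ι → B)) {a : ι → B} {j : ι}
    (hslice : ∀ b, update a j b ∈ U) : ∃ t : B → E, Continuous t ∧ ∀ b, p (t b) = b := by
  refine ⟨fun b => s ⟨update a j b, hslice b⟩ j, ?_, fun b => ?_⟩
  · have hupdate : Continuous fun b => update a j b := continuous_const.update j continuous_id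
    exact (continuous_apply j).comp (hs.comp (hupdate.subtype_mk hslice))
  · simpa using congrFun (hsec ⟨update a j b, hslice b⟩) j

theorem stmt9_general (E B : Type*) [TopologicalSpace E] [TopologicalSpace B]
    (p : E → B)
    (hnosec : ¬ ∃ s : B → E, Continuous s ∧ ∀ b, p (s b) = b) :
    ¬ ∃ (U : Set (ℕ → B)) (s : U → ℕ → E), U.Nonempty ∧ IsOpen U ∧ Continuous s ∧
      ∀ u : U, (fun i => p (s u i)) = (u : ℕ → B) := by
  rintro ⟨U, s, ⟨a, ha⟩, hU, hs, hsec⟩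
  obtain ⟨j, hslice⟩ := hU.exists_forall_update_mem ha
  exact hnosec (exists_continuous_section_of_forall_update_mem hs hsec hslice)

/-- if a continuous surjection `p : E → B` (with `B` nonempty) admits
no continuous global section, then the countable product map `E^ℕ → B^ℕ` admits no
continuous local section on any nonempty open subset of `B^ℕ`. -/
theorem stmt9 (E B : Type*) [TopologicalSpace E] [TopologicalSpace B] [Nonempty B]
    (p : E → B) (hc : Continuous p) (hs : Function.Surjective p)
    (hnosec : ¬ ∃ s : B → E, Continuous s ∧ ∀ b, p (s b) = b) :
    ¬ ∃ (U : Set (ℕ → B)) (s : U → ℕ → E), U.Nonempty ∧ IsOpen U ∧ Continuous s ∧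
      ∀ u : U, (fun i => p (s u i)) = (u : ℕ → B) :=
  stmt9_general E B p hnosec
end

section
/- The orbit map SO(3) → S², A ↦ A·e₃ (where e₃ is a fixed unit vector), admits no continuous global section. -/
/-!
The first column of a section `s` is a nowhere-vanishing continuous tangent vector field
`x ↦ s(x) e₁` on `S²`, so it suffices to prove the hairy ball theorem. Pull such a field back
along spherical coordinates `(θ, φ) ∈ ℝ²` and write it in the frame `(e_θ, e_φ)` as a nowhere-zero
complex number `f(θ, φ)`; this frame is orthonormal and tangent even at the poles. Since `ℝ²` is
simply connected, `f = exp G` for a continuous `G`. As `f` is `2π`-periodic in `θ`, the winding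
`G(2π, φ) - G(0, φ)` is independent of `φ`. But at a pole the field is constant while the frame
turns once around it, positively at `φ = 0` and negatively at `φ = π`, so the winding is `2πi`
at `φ = 0` and `-2πi` at `φ = π`.
-/

open Complex Real Matrix

local notation "E³" => EuclideanSpace ℝ (Fin 3)

theorem exists_continuous_exp_eq {A : Type*} [TopologicalSpace A] [SimplyConnectedSpace A]
    [LocallyPathConnectedSpace A] {f : A → ℂ} (hf : Continuous f) (hf0 : ∀ a, f a ≠ 0) :
    ∃ G : A → ℂ, Continuous G ∧ ∀ a, exp (G a) = f a := by
  obtain ⟨a₀⟩ := (inferInstance : Nonempty A)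
  obtain ⟨G, ⟨-, hG⟩, -⟩ := isCoveringMapOn_exp.existsUnique_continuousMap_lifts ⟨f, hf⟩
    (a₀ := a₀) (exp_log (hf0 a₀)) hf0
  exact ⟨G, G.continuous, congrFun hG⟩

theorem sub_eq_mul_sub_of_exp_eq_mul_exp {g : ℝ → ℂ} (hg : Continuous g) {z c : ℂ}
    (h : ∀ t, exp (g t) = z * exp (c * t)) (a b : ℝ) : g b - g a = c * (b - a) := by
  have hconst := isCoveringMap_exp.const_of_comp (g := fun t : ℝ => g t - c * t) (by fun_prop)
    (fun t t' => by simp [Complex.exp_sub, h]) a b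
  linear_combination -hconst

theorem Matrix.dotProduct_mulVec_mulVec_of_mem_orthogonalGroup {n : Type*} [Fintype n]
    [DecidableEq n] {A : Matrix n n ℝ} (hA : A ∈ orthogonalGroup n ℝ) (u w : n → ℝ) :
    A *ᵥ u ⬝ᵥ A *ᵥ w = u ⬝ᵥ w := by
  rw [dotProduct_mulVec, vecMul_mulVec, (mem_orthogonalGroup_iff' _ _).mp hA, vecMul_one]

theorem real_inner_vec_three (u : E³) (a b c : ℝ) :
    inner ℝ u !₂[a, b, c] = u 0 * a + u 1 * b + u 2 * c := by
  simp [EuclideanSpace.inner_eq_star_dotProduct, dotProduct, Fin.sum_univ_three]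
  ring

/-- The point of `S²` with azimuth `p.1` and polar angle `p.2`. -/
noncomputable def sphericalPoint (p : ℝ × ℝ) : E³ :=
  !₂[Real.sin p.2 * Real.cos p.1, Real.sin p.2 * Real.sin p.1, Real.cos p.2]

noncomputable def azimuthalUnit (p : ℝ × ℝ) : E³ := !₂[-Real.sin p.1, Real.cos p.1, 0]

noncomputable def polarUnit (p : ℝ × ℝ) : E³ :=
  !₂[Real.cos p.2 * Real.cos p.1, Real.cos p.2 * Real.sin p.1, -Real.sin p.2]

theorem continuous_sphericalPoint : Continuous sphericalPoint := by
  unfold sphericalPoint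
  fun_prop

theorem norm_sphericalPoint (p : ℝ × ℝ) : ‖sphericalPoint p‖ = 1 := by
  rw [← pow_eq_one_iff_of_nonneg (norm_nonneg _) two_ne_zero, EuclideanSpace.real_norm_sq_eq]
  simp [sphericalPoint, Fin.sum_univ_three]
  linear_combination Real.sin_sq_add_cos_sq p.2 + Real.sin p.2 ^ 2 * Real.sin_sq_add_cos_sq p.1

theorem sum_sq_inner_sphericalFrame (u : E³) (p : ℝ × ℝ) :
    inner ℝ u (azimuthalUnit p) ^ 2 + inner ℝ u (polarUnit p) ^ 2
      + inner ℝ u (sphericalPoint p) ^ 2 = ‖u‖ ^ 2 := by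
  simp only [azimuthalUnit, polarUnit, sphericalPoint, real_inner_vec_three,
    EuclideanSpace.real_norm_sq_eq, Fin.sum_univ_three]
  linear_combination
    ((u 0 * Real.cos p.1 + u 1 * Real.sin p.1) ^ 2 + u 2 ^ 2) * Real.sin_sq_add_cos_sq p.2
      + (u 0 ^ 2 + u 1 ^ 2) * Real.sin_sq_add_cos_sq p.1

theorem sphericalPoint_mk_zero (t : ℝ) : sphericalPoint (t, 0) = sphericalPoint (0, 0) := by
  simp [sphericalPoint]

theorem sphericalPoint_mk_pi (t : ℝ) : sphericalPoint (t, π) = sphericalPoint (0, π) := by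
  simp [sphericalPoint]

theorem sphericalPoint_two_pi_mk (s : ℝ) : sphericalPoint (2 * π, s) = sphericalPoint (0, s) := by
  simp [sphericalPoint]

noncomputable def sphericalFrameCoord (u : E³) (p : ℝ × ℝ) : ℂ :=
  inner ℝ u (azimuthalUnit p) + inner ℝ u (polarUnit p) * I

theorem sphericalFrameCoord_ne_zero {u : E³} (hu : u ≠ 0) {p : ℝ × ℝ}
    (h : inner ℝ u (sphericalPoint p) = 0) : sphericalFrameCoord u p ≠ 0 := by
  intro h0
  have hre := congrArg re h0
  have him := congrArg im h0
  simp [sphericalFrameCoord] at hre him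
  have hnorm := sum_sq_inner_sphericalFrame u p
  rw [hre, him, h] at hnorm
  exact hu (by simpa using hnorm.symm)

theorem sphericalFrameCoord_mk_zero (u : E³) (t : ℝ) :
    sphericalFrameCoord u (t, 0) = (u 1 + u 0 * I) * exp (I * t) := by
  rw [mul_comm I, exp_mul_I, ← ofReal_cos, ← ofReal_sin]
  apply Complex.ext <;>
    simp [sphericalFrameCoord, azimuthalUnit, polarUnit, real_inner_vec_three] <;> ring

theorem sphericalFrameCoord_mk_pi (u : E³) (t : ℝ) :
    sphericalFrameCoord u (t, π) = (u 1 - u 0 * I) * exp (-I * t) := by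
  rw [neg_mul, ← mul_neg, mul_comm I, exp_mul_I, ← ofReal_neg, ← ofReal_cos, ← ofReal_sin]
  apply Complex.ext <;>
    simp [sphericalFrameCoord, azimuthalUnit, polarUnit, real_inner_vec_three] <;> ring

theorem sphericalFrameCoord_two_pi_mk (u : E³) (s : ℝ) :
    sphericalFrameCoord u (2 * π, s) = sphericalFrameCoord u (0, s) := by
  simp [sphericalFrameCoord, azimuthalUnit, polarUnit]

theorem exists_eq_zero_of_continuous_tangent_field (v : Metric.sphere (0 : E³) 1 → E³)
    (hv : Continuous v) (htan : ∀ x, inner ℝ (v x) (x : E³) = 0) : ∃ x, v x = 0 := by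
  by_contra! hv0
  let X : ℝ × ℝ → Metric.sphere (0 : E³) 1 :=
    fun p => ⟨sphericalPoint p, mem_sphere_zero_iff_norm.mpr (norm_sphericalPoint p)⟩
  have hX : Continuous X := continuous_sphericalPoint.subtype_mk _
  have hX_mk_zero (t : ℝ) : X (t, 0) = X (0, 0) := Subtype.ext (sphericalPoint_mk_zero t)
  have hX_mk_pi (t : ℝ) : X (t, π) = X (0, π) := Subtype.ext (sphericalPoint_mk_pi t)
  have hX_two_pi_mk (s : ℝ) : X (2 * π, s) = X (0, s) := Subtype.ext (sphericalPoint_two_pi_mk s)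
  let f p := sphericalFrameCoord (v (X p)) p
  have hf : Continuous f := by
    unfold f sphericalFrameCoord azimuthalUnit polarUnit
    fun_prop
  have hf0 (p : ℝ × ℝ) : f p ≠ 0 := sphericalFrameCoord_ne_zero (hv0 _) (htan (X p))
  obtain ⟨G, hG, hGf⟩ := exists_continuous_exp_eq hf hf0
  have north := sub_eq_mul_sub_of_exp_eq_mul_exp (g := fun t => G (t, 0)) (by fun_prop)
    (fun t => by rw [hGf]; simp only [f, hX_mk_zero t]; exact sphericalFrameCoord_mk_zero _ t)
    0 (2 * π)
  have south := sub_eq_mul_sub_of_exp_eq_mul_exp (g := fun t => G (t, π)) (by fun_prop)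
    (fun t => by rw [hGf]; simp only [f, hX_mk_pi t]; exact sphericalFrameCoord_mk_pi _ t)
    0 (2 * π)
  have seam := sub_eq_mul_sub_of_exp_eq_mul_exp (g := fun s => G (2 * π, s) - G (0, s))
    (by fun_prop) (z := 1) (c := 0) (fun s => by
      have hf_periodic : f (2 * π, s) = f (0, s) := by
        simp only [f, hX_two_pi_mk, sphericalFrameCoord_two_pi_mk]
      rw [Complex.exp_sub, hGf, hGf, hf_periodic, div_self (hf0 _)]
      simp) 0 π
  push_cast at north south seam
  have : (4 * π : ℂ) * I = 0 := by linear_combination south - north - seam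
  simp [Real.pi_ne_zero] at this

/-- the orbit map `SO(3) → S²`, `A ↦ A · e₃`, admits no continuous
global section, i.e. there is no continuous `s : S² → SO(3)` with `s(x) · e₃ = x`
for all `x ∈ S²`. -/
theorem stmt10 :
    ¬ ∃ s : Metric.sphere (0 : EuclideanSpace ℝ (Fin 3)) 1 →
        Matrix.specialOrthogonalGroup (Fin 3) ℝ,
      Continuous s ∧
        ∀ x : Metric.sphere (0 : EuclideanSpace ℝ (Fin 3)) 1,
          Matrix.mulVec ((s x : Matrix (Fin 3) (Fin 3) ℝ))
              ((WithLp.equiv 2 (Fin 3 → ℝ)) (EuclideanSpace.single (2 : Fin 3) (1 : ℝ)))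
            = (WithLp.equiv 2 (Fin 3 → ℝ)) (x : EuclideanSpace ℝ (Fin 3)) := by
  rintro ⟨s, hs, hsec⟩
  have hortho (x) : (s x : Matrix (Fin 3) (Fin 3) ℝ) ∈ orthogonalGroup (Fin 3) ℝ :=
    (mem_specialOrthogonalGroup_iff.mp (s x).2).1
  obtain ⟨x, hx⟩ := exists_eq_zero_of_continuous_tangent_field
    (fun x => WithLp.toLp 2 ((s x : Matrix (Fin 3) (Fin 3) ℝ) *ᵥ Pi.single 0 1)) (by fun_prop)
    (fun x => by
      rw [EuclideanSpace.inner_eq_star_dotProduct, star_trivial, ← WithLp.equiv_apply, ← hsec,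
        dotProduct_mulVec_mulVec_of_mem_orthogonalGroup (hortho x)]
      simp)
  have hsq := congrArg (fun v : E³ => v.ofLp ⬝ᵥ v.ofLp) hx
  simp only [dotProduct_mulVec_mulVec_of_mem_orthogonalGroup (hortho x)] at hsq
  simp at hsq
end
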